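/- For every ε ∈ (0,1) there exists a constant C_ε > 0 such that for all real numbers a, b > 0, |a - b| · (a + b)^{ε - 1} ≤ C_ε · |a^ε - b^ε|. -/
import Mathlib

private lemma key_aux (ε : ℝ) (hε0 : 0 < ε) (hε1 : ε < 1) {a b : ℝ} (ha : 0 < a) (hb : 0 < b)
    (hba : b ≤ a) : ε * ((a - b) * a ^ (ε - 1)) ≤ a ^ ε - b ^ ε := by
  have hs : (-1 : ℝ) ≤ b / a - 1 := by
    have : 0 < b / a := div_pos hb ha
    linarith
  have hber : (1 + (b / a - 1)) ^ ε ≤ 1 + ε * (b / a - 1) :=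
    rpow_one_add_le_one_add_mul_self hs hε0.le hε1.le
  rw [add_sub_cancel] at hber
  have hdiv : (b / a) ^ ε = b ^ ε / a ^ ε := Real.div_rpow hb.le ha.le ε
  have hapos : (0 : ℝ) < a ^ ε := Real.rpow_pos_of_pos ha ε
  have h2 : b ^ ε ≤ a ^ ε + ε * (a ^ ε * (b / a - 1)) := by
    have := mul_le_mul_of_nonneg_right hber hapos.le
    rw [hdiv, div_mul_cancel₀ _ hapos.ne'] at this
    linarith [this]
  have h3 : a ^ ε * (b / a - 1) = a ^ (ε - 1) * (b - a) := by
    have : a ^ (ε - 1) = a ^ ε / a := by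
      rw [Real.rpow_sub ha, Real.rpow_one]
    rw [this]
    field_simp
  rw [h3] at h2
  linarith [h2]

/-- Key elementary inequality for mass conservation: for every `ε ∈ (0,1)` there is a
constant `C_ε > 0` with `|a - b| (a + b)^(ε-1) ≤ C_ε |a^ε - b^ε|` for all `a, b > 0`. -/
theorem key_power_difference_inequality (ε : ℝ) (hε0 : 0 < ε) (hε1 : ε < 1) :
    ∃ C : ℝ, 0 < C ∧ ∀ a b : ℝ, 0 < a → 0 < b →
      |a - b| * (a + b) ^ (ε - 1) ≤ C * |a ^ ε - b ^ ε| := by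
  refine ⟨1 / ε, by positivity, ?_⟩
  have main : ∀ a b : ℝ, 0 < a → 0 < b → b ≤ a →
      |a - b| * (a + b) ^ (ε - 1) ≤ 1 / ε * |a ^ ε - b ^ ε| := by
    intro a b ha hb hba
    have h1 : (a + b) ^ (ε - 1) ≤ a ^ (ε - 1) :=
      Real.rpow_le_rpow_of_nonpos ha (by linarith) (by linarith)
    have h2 := key_aux ε hε0 hε1 ha hb hba
    have habs1 : |a - b| = a - b := abs_of_nonneg (by linarith)
    have habs2 : |a ^ ε - b ^ ε| = a ^ ε - b ^ ε := by
      rw [abs_of_nonneg]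
      have := Real.rpow_le_rpow hb.le hba hε0.le
      linarith
    rw [habs1, habs2]
    have hstep : (a - b) * (a + b) ^ (ε - 1) ≤ (a - b) * a ^ (ε - 1) :=
      mul_le_mul_of_nonneg_left h1 (by linarith)
    rw [div_mul_eq_mul_div, le_div_iff₀ hε0]
    nlinarith [hstep]
  intro a b ha hb
  rcases le_total b a with h | h
  · exact main a b ha hb h
  · have := main b a hb ha h
    rwa [abs_sub_comm, add_comm, abs_sub_comm (b ^ ε)] at this
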